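/- The fixed points of the unperturbed learning dynamics are exactly the aligned states: a joint state x = (x_1, …, x_n), with x_i = (m_i, ā_i, ū_i), satisfies F⁰(x) = x if and only if no proposer is watchful (m_i ≠ W for all i) and every proposer's baseline utility equals the utility it receives when all proposers play their baseline actions (ū_i = u_i(ā) for all i, where ā = (ā_1, …, ā_n)). -/

import Mathlib

set_option linter.unusedSectionVars false
/-- A two-sided matching market with proposers `P` and acceptors `A`.
`OP i` is proposer `i`'s preference function over `A ∪ {∅}` (where `none` is `∅`),
and `OA j` is acceptor `j`'s preference function over `P ∪ {∅}`. -/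
structure Market (P A : Type) [Fintype P] [Fintype A] where
  OP : P → Option A → ℝ
  OA : A → Option P → ℝ
  OP_inj : ∀ i, Function.Injective (OP i)
  OA_inj : ∀ j, Function.Injective (OA j)
  OP_none : ∀ i, OP i none = 0
  OA_none : ∀ j, OA j none = 0
  OP_pos : ∀ i j, 0 < OP i (some j)
  OA_pos : ∀ j i, 0 < OA j (some i)
  OP_le_one : ∀ i o, OP i o ≤ 1
  OA_le_one : ∀ j o, OA j o ≤ 1

/-- A match: each proposer gets a partner in `A ∪ {∅}`, each acceptor a partner
in `P ∪ {∅}`, consistently. -/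
structure Matching (P A : Type) where
  μP : P → Option A
  μA : A → Option P
  consistent : ∀ i j, μP i = some j ↔ μA j = some i

/-- A match is stable if there is no proposer–acceptor pair who strictly prefer
each other to their assigned partners. -/
def Stable {P A : Type} [Fintype P] [Fintype A] (M : Market P A) (μ : Matching P A) : Prop :=
  ¬ ∃ (i : P) (j : A), M.OP i (some j) > M.OP i (μ.μP i) ∧ M.OA j (some i) > M.OA j (μ.μA j)

variable {P A : Type} [Fintype P] [Fintype A] [DecidableEq P] [DecidableEq A]

/-- Given an action profile `a`, acceptor `j` accepts its most preferred
proposer among those proposing to it (if any). -/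
noncomputable def accept (M : Market P A) (a : P → Option A) (j : A) : Option P :=
  if h : (Finset.univ.filter fun i => a i = some j).Nonempty then
    some (Classical.choose
      ((Finset.univ.filter fun i => a i = some j).exists_max_image
        (fun i => M.OA j (some i)) h))
  else none

theorem accept_spec {M : Market P A} {a : P → Option A} {j : A} {i : P}
    (h : accept M a j = some i) :
    a i = some j ∧ ∀ i', a i' = some j → M.OA j (some i') ≤ M.OA j (some i) := by
  unfold accept at h
  split_ifs at h with hne
  · obtain ⟨hmem, hmax⟩ := Classical.choose_spec
      ((Finset.univ.filter fun i => a i = some j).exists_max_image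
        (fun i => M.OA j (some i)) hne)
    have hi : Classical.choose
        ((Finset.univ.filter fun i => a i = some j).exists_max_image
          (fun i => M.OA j (some i)) hne) = i := Option.some_injective _ h
    rw [hi] at hmem hmax
    refine ⟨by simpa using hmem, fun i' hi' => hmax i' (by simpa using hi')⟩

theorem accept_of_propose {M : Market P A} {a : P → Option A} {j : A} {i : P}
    (h : a i = some j) : ∃ i', accept M a j = some i' := by
  unfold accept
  have hne : (Finset.univ.filter fun i => a i = some j).Nonempty :=
    ⟨i, by simpa using h⟩
  rw [dif_pos hne]
  exact ⟨_, rfl⟩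

/-- The match resulting from an action profile `a`. -/
noncomputable def matchOf (M : Market P A) (a : P → Option A) : Matching P A where
  μP i := (a i).bind fun j => if accept M a j = some i then some j else none
  μA j := accept M a j
  consistent := by
    intro i j
    constructor
    · intro h
      rcases Option.bind_eq_some_iff.mp h with ⟨j', hj', hif⟩
      by_cases hc : accept M a j' = some i
      · rw [if_pos hc] at hif
        exact (Option.some_injective _ hif) ▸ hc
      · rw [if_neg hc] at hif
        exact absurd hif (by simp)
    · intro h
      have hai : a i = some j := (accept_spec h).1
      show (a i).bind _ = some j
      rw [hai]
      simp [h]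

/-- The utility of proposer `i` under action profile `a`. -/
noncomputable def util (M : Market P A) (a : P → Option A) (i : P) : ℝ :=
  M.OP i ((matchOf M a).μP i)

/-- Pure Nash equilibrium: no proposer can strictly increase its utility by a
unilateral deviation. -/
def IsNash (M : Market P A) (a : P → Option A) : Prop :=
  ∀ (i : P) (a' : Option A), util M (Function.update a i a') i ≤ util M a i

/-- The mood of a proposer: content, watchful, or discontent. -/
inductive Mood | C | W | D
deriving DecidableEq

/-- A proposer's state: a mood, a baseline action, and a baseline utility. -/
abbrev LState (P A : Type) := Mood × Option A × ℝ

/-- Joint states are valid when every discontent proposer has baseline action `∅`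
and baseline utility `0`. -/
def ValidState {P A : Type} (x : P → LState P A) : Prop :=
  ∀ i, (x i).1 = Mood.D → (x i).2.1 = none ∧ (x i).2.2 = 0

/-- The unperturbed learning dynamics (experimentation rate `ε = 0`): every
proposer plays its baseline action and updates its state deterministically. -/
noncomputable def F0 (M : Market P A) (x : P → LState P A) : P → LState P A :=
  fun i =>
    let abar : P → Option A := fun k => (x k).2.1
    let u : ℝ := util M abar i
    let ubar : ℝ := (x i).2.2
    match (x i).1 with
    | Mood.C => if ubar ≤ u then (Mood.C, (x i).2.1, u) else (Mood.W, (x i).2.1, ubar)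
    | Mood.W => if ubar ≤ u then (Mood.C, (x i).2.1, ubar) else (Mood.D, none, 0)
    | Mood.D => (Mood.D, none, 0)

theorem util_eq_zero_of_eq_none (M : Market P A) {a : P → Option A} {i : P} (h : a i = none) :
    util M a i = 0 := by
  simp [util, matchOf, h, M.OP_none]

theorem F0_apply_eq_self_iff (M : Market P A) (x : P → LState P A) (i : P)
    (hvalid : (x i).1 = Mood.D → (x i).2.1 = none ∧ (x i).2.2 = 0) :
    F0 M x i = x i ↔ (x i).1 ≠ Mood.W ∧ (x i).2.2 = util M (fun k => (x k).2.1) i := by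
  simp only [F0]
  rcases hx : x i with ⟨m, a, ubar⟩
  cases m with
  | C =>
    by_cases h : ubar ≤ util M (fun k => (x k).2.1) i
    · simpa [h] using eq_comm
    · simpa [h] using fun heq => h heq.le
  | W => by_cases h : ubar ≤ util M (fun k => (x k).2.1) i <;> simp [h]
  | D =>
    obtain ⟨rfl, rfl⟩ : a = none ∧ ubar = 0 := by simpa [hx] using hvalid
    have hnone : (x i).2.1 = none := by rw [hx]
    simp [util_eq_zero_of_eq_none M (a := fun k => (x k).2.1) hnone]

theorem f0_fixed_iff_aligned_general
    (M : Market P A) (x : P → LState P A) (hvalid : ValidState x) :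
    F0 M x = x ↔
      ((∀ i, (x i).1 ≠ Mood.W) ∧
        ∀ i, (x i).2.2 = util M (fun k => (x k).2.1) i) := by
  rw [funext_iff, ← forall_and]
  exact forall_congr' fun i => F0_apply_eq_self_iff M x i (hvalid i)

/-- The fixed points of the unperturbed learning dynamics are exactly the aligned
states: no proposer is watchful, and every baseline utility equals the utility
received when all proposers play their baseline actions. -/
theorem f0_fixed_iff_aligned [Nonempty P] [Nonempty A]
    (M : Market P A) (x : P → LState P A) (hvalid : ValidState x) :
    F0 M x = x ↔
      ((∀ i, (x i).1 ≠ Mood.W) ∧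
        ∀ i, (x i).2.2 = util M (fun k => (x k).2.1) i) :=
  f0_fixed_iff_aligned_general M x hvalid
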